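/- arXiv:2409.04226 — 2 statements merged into one kernel-verified Lean document; each statement's English description precedes it below -/
import Mathlib

section
/- For any digraph D = (V, A) on n vertices with minimum in-degree δ⁻ and any integer k with 1 ≤ k ≤ δ⁻, the k-domination number satisfies γ_k(D) ≤ n · (1 - δ' / (C(δ⁻, k-1)^(1/δ') · (1 + δ')^(1 + 1/δ'))), where δ' = δ⁻ - k + 1 and C(δ⁻, k-1) is the binomial coefficient. -/
/-- In-neighbourhood of `v` in the digraph with arc relation `A`. -/
def inN {V : Type*} (A : V → V → Prop) (v : V) : Set V := {u | A u v}

/-- `X` is a `k`-dominating set of the digraph with arc relation `A`. -/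
def kDom {V : Type*} (A : V → V → Prop) (k : ℕ) (X : Set V) : Prop :=
  ∀ v, v ∉ X → k ≤ ((inN A v) ∩ X).ncard

/-- The `k`-domination number. -/
noncomputable def gammaK {V : Type*} [Fintype V] (A : V → V → Prop) (k : ℕ) : ℕ :=
  sInf {m | ∃ X : Set V, kDom A k X ∧ X.ncard = m}

/-!
Pick a random set `S` containing each vertex independently with probability `p`, and let `B(S)`
be the set of vertices outside `S` with fewer than `k` in-neighbours in `S`; then `S ∪ B(S)` is
`k`-dominating. Fix `δ` in-neighbours `M` of a vertex `v`. If `v ∈ B(S)`, then `S` avoids `v` and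
`M \ W` for some `(k-1)`-subset `W` of `M`, so by a union bound `P(v ∈ B(S)) ≤ C q^(δ-k+2)`,
where `C = C(δ, k-1)` and `q = 1 - p`. Hence `E|S ∪ B(S)| ≤ n (1 - q + C q^(δ-k+2))`, and
`q = (C (δ-k+2))^(-1/(δ-k+1))` turns this into the stated bound.
-/

open Finset

lemma Finset.sum_filter_le_sum_sum_filter {α ι : Type*} {s : Finset α} {I : Finset ι}
    {f : α → ℝ} (hf : ∀ x ∈ s, 0 ≤ f x) {P : α → Prop} [DecidablePred P]
    {Q : ι → α → Prop} [∀ i, DecidablePred (Q i)] (hcover : ∀ x ∈ s, P x → ∃ i ∈ I, Q i x) :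
    ∑ x ∈ s with P x, f x ≤ ∑ i ∈ I, ∑ x ∈ s with Q i x, f x := by
  calc ∑ x ∈ s with P x, f x ≤ ∑ x ∈ s with P x, ∑ i ∈ I with Q i x, f x :=
        sum_le_sum fun x hx => by
          obtain ⟨hxs, hPx⟩ := mem_filter.1 hx
          obtain ⟨i, hi, hQ⟩ := hcover x hxs hPx
          exact single_le_sum (f := fun _ => f x) (fun _ _ => hf x hxs) (mem_filter.2 ⟨hi, hQ⟩)
    _ ≤ ∑ x ∈ s, ∑ i ∈ I with Q i x, f x :=
        sum_le_sum_of_subset_of_nonneg (filter_subset _ _) fun x hx _ =>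
          sum_nonneg fun _ _ => hf x hx
    _ = ∑ i ∈ I, ∑ x ∈ s with Q i x, f x := by simp only [sum_filter]; exact sum_comm

namespace RandomSubset

variable {V : Type*} [Fintype V] (p : ℝ)

/-- The probability that the random subset of `V`, containing each element independently with
probability `p`, equals `S`; sums over `Finset V` weighted by it are expectations. -/
noncomputable def weight (S : Finset V) : ℝ :=
  p ^ #S * (1 - p) ^ (Fintype.card V - #S)

variable {p}

lemma weight_nonneg (hp0 : 0 ≤ p) (hp1 : p ≤ 1) (S : Finset V) : 0 ≤ weight p S := by
  unfold weight
  have := sub_nonneg.2 hp1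
  positivity

lemma sum_weight_disjoint [DecidableEq V] (p : ℝ) (T : Finset V) :
    ∑ S with Disjoint S T, weight p S = (1 - p) ^ #T := by
  have hfilter : ({S | Disjoint S T} : Finset (Finset V)) = Tᶜ.powerset := by
    ext S; simp [subset_compl_iff_disjoint_right]
  have hcard : #Tᶜ + #T = Fintype.card V := by rw [card_compl]; have := card_le_univ T; omega
  calc ∑ S with Disjoint S T, weight p S
      = ∑ S ∈ Tᶜ.powerset, p ^ #S * (1 - p) ^ (#Tᶜ - #S) * (1 - p) ^ #T := by
        rw [hfilter]
        refine sum_congr rfl fun S hS => ?_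
        have := card_le_card (mem_powerset.1 hS)
        rw [weight, mul_assoc, ← pow_add]
        congr 2
        omega
    _ = (1 - p) ^ #T := by
        rw [← sum_mul, sum_pow_mul_eq_add_pow, add_sub_cancel, one_pow, one_mul]

lemma sum_weight (p : ℝ) : ∑ S : Finset V, weight p S = 1 := by
  classical
  simpa using sum_weight_disjoint (V := V) p ∅

lemma sum_weight_mem [DecidableEq V] (p : ℝ) (v : V) : ∑ S with v ∈ S, weight p S = p := by
  have hnot := sum_weight_disjoint (V := V) p {v}
  simp only [disjoint_singleton_right, card_singleton, pow_one] at hnot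
  have := sum_filter_add_sum_filter_not univ (fun S : Finset V => v ∈ S) (weight p)
  rw [sum_weight, hnot] at this
  linarith

lemma sum_weight_mul_card_filter (P : Finset V → V → Prop) [∀ S, DecidablePred (P S)] :
    ∑ S, weight p S * #{v | P S v} = ∑ v, ∑ S with P S v, weight p S := by
  simp only [card_eq_sum_ones, Nat.cast_sum, mul_sum, sum_filter, Nat.cast_ite, Nat.cast_one,
    Nat.cast_zero, mul_ite, mul_one, mul_zero]
  exact sum_comm

lemma sum_weight_mul_card [DecidableEq V] (p : ℝ) :
    ∑ S : Finset V, weight p S * #S = Fintype.card V * p := by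
  simpa [sum_weight_mem] using sum_weight_mul_card_filter (p := p) (fun S (v : V) => v ∈ S)

lemma exists_le_sum_weight_mul (hp0 : 0 ≤ p) (hp1 : p ≤ 1) (f : Finset V → ℝ) :
    ∃ S, f S ≤ ∑ T, weight p T * f T := by
  obtain ⟨S, -, hS⟩ := exists_min_image univ f univ_nonempty
  refine ⟨S, ?_⟩
  calc f S = ∑ T, weight p T * f S := by rw [← sum_mul, sum_weight, one_mul]
    _ ≤ ∑ T, weight p T * f T :=
        sum_le_sum fun T _ =>
          mul_le_mul_of_nonneg_left (hS T (mem_univ T)) (weight_nonneg hp0 hp1 T)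

lemma sum_weight_not_mem_card_inter_lt_le [DecidableEq V] (hp0 : 0 ≤ p) (hp1 : p ≤ 1) {v : V}
    {N : Finset V} (hv : v ∉ N) {δ k : ℕ} (hkδ : k ≤ δ + 1) (hδN : δ ≤ #N) :
    ∑ S with v ∉ S ∧ #(S ∩ N) < k, weight p S ≤
      δ.choose (k - 1) * (1 - p) ^ (δ - (k - 1) + 1) := by
  obtain ⟨M, hMN, hM⟩ := exists_subset_card_eq hδN
  have hcover : ∀ S ∈ (univ : Finset (Finset V)), v ∉ S ∧ #(S ∩ N) < k →
      ∃ W ∈ M.powersetCard (k - 1), Disjoint S (insert v (M \ W)) := by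
    rintro S - ⟨hvS, hSN⟩
    have hSM : #(S ∩ M) ≤ k - 1 := by
      have := card_le_card (inter_subset_inter_left hMN : S ∩ M ⊆ S ∩ N); omega
    obtain ⟨W, hSW, hWM, hW⟩ := exists_subsuperset_card_eq inter_subset_right hSM (by omega)
    refine ⟨W, mem_powersetCard.2 ⟨hWM, hW⟩, disjoint_insert_right.2 ⟨hvS, ?_⟩⟩
    exact disjoint_left.2 fun x hxS hxMW =>
      (mem_sdiff.1 hxMW).2 (hSW (mem_inter.2 ⟨hxS, (mem_sdiff.1 hxMW).1⟩))
  have hcard : ∀ W ∈ M.powersetCard (k - 1), #(insert v (M \ W)) = δ - (k - 1) + 1 := by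
    intro W hW
    obtain ⟨hWM, hW⟩ := mem_powersetCard.1 hW
    rw [card_insert_of_notMem fun h => hv (hMN (mem_sdiff.1 h).1), card_sdiff_of_subset hWM,
      hW, hM]
  calc ∑ S with v ∉ S ∧ #(S ∩ N) < k, weight p S
      ≤ ∑ W ∈ M.powersetCard (k - 1), ∑ S with Disjoint S (insert v (M \ W)), weight p S :=
        sum_filter_le_sum_sum_filter (fun S _ => weight_nonneg hp0 hp1 S) hcover
    _ = ∑ W ∈ M.powersetCard (k - 1), (1 - p) ^ (δ - (k - 1) + 1) :=
        sum_congr rfl fun W hW => by rw [sum_weight_disjoint, hcard W hW]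
    _ = δ.choose (k - 1) * (1 - p) ^ (δ - (k - 1) + 1) := by
        rw [sum_const, card_powersetCard, hM, nsmul_eq_mul]

end RandomSubset

lemma exists_mem_Icc_one_sub_add_mul_pow_eq {C : ℝ} (hC : 1 ≤ C) {d : ℕ} (hd : 0 < d) :
    ∃ q ∈ Set.Icc (0 : ℝ) 1, 1 - q + C * q ^ (d + 1) =
      1 - (d : ℝ) / (C ^ ((1 : ℝ) / d) * (1 + (d : ℝ)) ^ ((1 : ℝ) + 1 / d)) := by
  set x := C * (1 + d)
  have hx : 1 ≤ x := one_le_mul_of_one_le_of_one_le hC (by simp)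
  have hx0 : 0 < x := by linarith
  have hd0 : (0 : ℝ) < d := by exact_mod_cast hd
  refine ⟨x ^ (-(1 / d : ℝ)), ⟨by positivity, Real.rpow_le_one_of_one_le_of_nonpos hx
    (by simp only [Left.neg_nonpos_iff]; positivity)⟩, ?_⟩
  have hqd : (x ^ (-(1 / d : ℝ))) ^ d = x⁻¹ := by
    rw [← Real.rpow_natCast, ← Real.rpow_mul hx0.le, neg_mul, one_div_mul_cancel hd0.ne',
      Real.rpow_neg_one]
  have hdenom : C ^ ((1 : ℝ) / d) * (1 + (d : ℝ)) ^ ((1 : ℝ) + 1 / d) =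
      (1 + d) * (x ^ (-(1 / d : ℝ)))⁻¹ := by
    rw [Real.rpow_add (by positivity), Real.rpow_one, Real.rpow_neg hx0.le, inv_inv,
      Real.mul_rpow (by linarith) (by positivity)]
    ring
  rw [hdenom, pow_succ, hqd]
  field_simp
  ring

section Digraph

variable {V : Type*} [Fintype V] (A : V → V → Prop) [DecidableRel A]

def inNFinset (v : V) : Finset V := {u | A u v}

lemma coe_inNFinset (v : V) : (inNFinset A v : Set V) = inN A v := by
  ext; simp [inNFinset, inN]

variable [DecidableEq V]

def underdominated (k : ℕ) (S : Finset V) : Finset V :=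
  {v | v ∉ S ∧ #(S ∩ inNFinset A v) < k}

lemma kDom_union_underdominated (k : ℕ) (S : Finset V) :
    kDom A k ↑(S ∪ underdominated A k S) := by
  intro v hv
  have hdom : k ≤ #(S ∩ inNFinset A v) := by
    by_contra! h
    exact hv (by simp [underdominated, h, em])
  calc k ≤ #(S ∩ inNFinset A v) := hdom
    _ ≤ #((S ∪ underdominated A k S) ∩ inNFinset A v) :=
        card_le_card (inter_subset_inter_right subset_union_left)
    _ = (inN A v ∩ ↑(S ∪ underdominated A k S)).ncard := by
        rw [← coe_inNFinset, ← coe_inter, Set.ncard_coe_finset, inter_comm]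

open RandomSubset

variable {A} {p : ℝ} {δ k : ℕ}

lemma sum_weight_mul_card_underdominated_le (hirr : ∀ v, ¬ A v v)
    (hmin : ∀ v, δ ≤ #(inNFinset A v)) (hkδ : k ≤ δ + 1) (hp0 : 0 ≤ p) (hp1 : p ≤ 1) :
    ∑ S, weight p S * #(underdominated A k S) ≤
      Fintype.card V * (δ.choose (k - 1) * (1 - p) ^ (δ - (k - 1) + 1)) := by
  simp only [underdominated]
  rw [sum_weight_mul_card_filter]
  calc ∑ v, ∑ S with v ∉ S ∧ #(S ∩ inNFinset A v) < k, weight p S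
      ≤ ∑ _v : V, δ.choose (k - 1) * (1 - p) ^ (δ - (k - 1) + 1) :=
        sum_le_sum fun v _ =>
          sum_weight_not_mem_card_inter_lt_le hp0 hp1 (by simpa [inNFinset] using hirr v) hkδ
            (hmin v)
    _ = _ := by rw [sum_const, card_univ, nsmul_eq_mul]

lemma exists_kDom_ncard_le (hirr : ∀ v, ¬ A v v) (hmin : ∀ v, δ ≤ #(inNFinset A v))
    (hkδ : k ≤ δ + 1) (hp0 : 0 ≤ p) (hp1 : p ≤ 1) :
    ∃ X : Set V, kDom A k X ∧
      (X.ncard : ℝ) ≤ Fintype.card V * (p + δ.choose (k - 1) * (1 - p) ^ (δ - (k - 1) + 1)) := by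
  obtain ⟨S, hS⟩ := exists_le_sum_weight_mul hp0 hp1
    fun S => (#S : ℝ) + #(underdominated A k S)
  refine ⟨↑(S ∪ underdominated A k S), kDom_union_underdominated A k S, ?_⟩
  calc ((↑(S ∪ underdominated A k S) : Set V).ncard : ℝ)
      ≤ #S + #(underdominated A k S) := by
        rw [Set.ncard_coe_finset]; exact_mod_cast card_union_le _ _
    _ ≤ ∑ T, weight p T * (#T + #(underdominated A k T)) := hS
    _ = ∑ T, weight p T * #T + ∑ T, weight p T * #(underdominated A k T) := by
        simp only [mul_add, sum_add_distrib]
    _ ≤ Fintype.card V * p +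
          Fintype.card V * (δ.choose (k - 1) * (1 - p) ^ (δ - (k - 1) + 1)) :=
        add_le_add (sum_weight_mul_card p).le
          (sum_weight_mul_card_underdominated_le hirr hmin hkδ hp0 hp1)
    _ = _ := by ring

end Digraph

theorem stmt0_general {V : Type*} [Fintype V] (A : V → V → Prop)
    (hirr : ∀ v, ¬ A v v)
    (δ : ℕ) (hδ : IsLeast {d : ℕ | ∃ v : V, ((inN A v).ncard = d)} δ)
    (k : ℕ) (hk : 1 ≤ k) (hkδ : k ≤ δ) :
    (gammaK A k : ℝ) ≤ (Fintype.card V : ℝ) *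
      (1 - ((δ - k + 1 : ℕ) : ℝ) /
        (((δ.choose (k - 1) : ℝ)) ^ ((1 : ℝ) / ((δ - k + 1 : ℕ) : ℝ)) *
          (1 + ((δ - k + 1 : ℕ) : ℝ)) ^ ((1 : ℝ) + (1 : ℝ) / ((δ - k + 1 : ℕ) : ℝ)))) := by
  classical
  have hmin : ∀ v, δ ≤ #(inNFinset A v) := fun v => by
    simpa [← coe_inNFinset, Set.ncard_coe_finset] using hδ.2 ⟨v, rfl⟩
  have hC : (1 : ℝ) ≤ δ.choose (k - 1) := by exact_mod_cast Nat.choose_pos (by omega)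
  obtain ⟨q, ⟨hq0, hq1⟩, hq⟩ :=
    exists_mem_Icc_one_sub_add_mul_pow_eq hC (d := δ - k + 1) (by omega)
  obtain ⟨X, hX, hXcard⟩ := exists_kDom_ncard_le hirr hmin (by omega : k ≤ δ + 1)
    (p := 1 - q) (by linarith) (by linarith)
  have hexp : δ - (k - 1) + 1 = δ - k + 1 + 1 := by omega
  calc (gammaK A k : ℝ) ≤ X.ncard :=
        by exact_mod_cast (Nat.sInf_le ⟨X, hX, rfl⟩ : gammaK A k ≤ X.ncard)
    _ ≤ _ := hXcard
    _ = _ := by rw [sub_sub_cancel, hexp, hq]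

theorem stmt0 {V : Type*} [Fintype V] [Nonempty V] (A : V → V → Prop)
    (hirr : ∀ v, ¬ A v v)
    (δ : ℕ) (hδ : IsLeast {d : ℕ | ∃ v : V, ((inN A v).ncard = d)} δ)
    (k : ℕ) (hk : 1 ≤ k) (hkδ : k ≤ δ) :
    (gammaK A k : ℝ) ≤ (Fintype.card V : ℝ) *
      (1 - ((δ - k + 1 : ℕ) : ℝ) /
        (((δ.choose (k - 1) : ℝ)) ^ ((1 : ℝ) / ((δ - k + 1 : ℕ) : ℝ)) *
          (1 + ((δ - k + 1 : ℕ) : ℝ)) ^ ((1 : ℝ) + (1 : ℝ) / ((δ - k + 1 : ℕ) : ℝ)))) :=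
  stmt0_general A hirr δ hδ k hk hkδ
end

section
/- For any real p ∈ [0,1] and integers 1 ≤ k ≤ δ, the sum over m from 0 to k-1 of C(δ, m) · p^m · (1-p)^(δ - m + 1) is at most C(δ, k-1) · (1-p)^(δ - k + 2). -/
/-!
Since `m ≤ k - 1 ≤ δ`, choosing `m` of `δ` elements can be done by first choosing a `(k - 1)`-subset
containing them, so `C(δ, m) ≤ C(δ, k - 1) · C(k - 1, m)`. Bounding each term this way and factoring
out `C(δ, k - 1) (1 - p)^(δ - k + 2)` leaves the binomial expansion of `(p + (1 - p))^(k - 1) = 1`.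
-/

open Finset

theorem Nat.choose_le_choose_mul_choose {n j m : ℕ} (hmj : m ≤ j) (hjn : j ≤ n) :
    n.choose m ≤ n.choose j * j.choose m := by
  rw [Nat.choose_mul hmj]
  exact Nat.le_mul_of_pos_right _ (Nat.choose_pos (by omega))

theorem sum_range_choose_mul_pow_mul_one_sub_pow {R : Type*} [CommRing R] (p : R) (n : ℕ) :
    ∑ m ∈ range (n + 1), (n.choose m : R) * p ^ m * (1 - p) ^ (n - m) = 1 := by
  have h := (add_pow p (1 - p) n).symm
  rw [add_sub_cancel, one_pow] at h
  exact (sum_congr rfl fun m _ => by ring).trans h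

theorem sum_range_choose_mul_pow_mul_one_sub_pow_le {R : Type*} [CommRing R] [LinearOrder R]
    [IsStrictOrderedRing R] {p : R} (hp0 : 0 ≤ p) (hp1 : p ≤ 1) {n j : ℕ} (hjn : j ≤ n) :
    ∑ m ∈ range (j + 1), (n.choose m : R) * p ^ m * (1 - p) ^ (n - m + 1)
      ≤ (n.choose j : R) * (1 - p) ^ (n - j + 1) := by
  have hq : 0 ≤ 1 - p := sub_nonneg.mpr hp1
  calc ∑ m ∈ range (j + 1), (n.choose m : R) * p ^ m * (1 - p) ^ (n - m + 1)
      ≤ ∑ m ∈ range (j + 1), (n.choose j : R) * (1 - p) ^ (n - j + 1) *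
          ((j.choose m : R) * p ^ m * (1 - p) ^ (j - m)) := by
        refine sum_le_sum fun m hm => ?_
        have hmj : m ≤ j := Nat.lt_succ_iff.mp (mem_range.mp hm)
        have hchoose : (n.choose m : R) ≤ n.choose j * j.choose m := by
          exact_mod_cast Nat.choose_le_choose_mul_choose hmj hjn
        rw [show n - m + 1 = (n - j + 1) + (j - m) by omega, pow_add]
        calc (n.choose m : R) * p ^ m * ((1 - p) ^ (n - j + 1) * (1 - p) ^ (j - m))
            ≤ (n.choose j * j.choose m) * p ^ m * ((1 - p) ^ (n - j + 1) * (1 - p) ^ (j - m)) := by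
              gcongr
          _ = _ := by ring
    _ = (n.choose j : R) * (1 - p) ^ (n - j + 1) := by
        rw [← mul_sum, sum_range_choose_mul_pow_mul_one_sub_pow, mul_one]

theorem stmt9 (p : ℝ) (hp0 : 0 ≤ p) (hp1 : p ≤ 1) (δ k : ℕ) (hk : 1 ≤ k) (hkδ : k ≤ δ) :
    ∑ m ∈ Finset.range k, (δ.choose m : ℝ) * p ^ m * (1 - p) ^ (δ - m + 1)
      ≤ (δ.choose (k - 1) : ℝ) * (1 - p) ^ (δ - k + 2) := by
  obtain ⟨j, rfl⟩ : ∃ j, k = j + 1 := ⟨k - 1, by omega⟩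
  rw [Nat.add_sub_cancel, show δ - (j + 1) + 2 = δ - j + 1 by omega]
  exact sum_range_choose_mul_pow_mul_one_sub_pow_le hp0 hp1 (by omega)
end
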